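/- arXiv:0804.4030 — 4 statements merged into one kernel-verified Lean document; each statement's English description precedes it below -/
import Mathlib

section
/- For points $x_i, x_j \in \mathbb{R}^N$ with $x_i \neq x_j$, exponents $\alpha, \beta \geq 1$, and any constant $0 < \sigma \leq \min(\alpha, \beta)$, there exists a constant $C > 0$ (depending only on $\alpha, \beta, \sigma$) such that for all $y \in \mathbb{R}^N$: $\frac{1}{(1+|y-x_j|)^{\alpha}(1+|y-x_i|)^{\beta}} \leq \frac{C}{|x_i-x_j|^{\sigma}}\left(\frac{1}{(1+|y-x_i|)^{\alpha+\beta-\sigma}} + \frac{1}{(1+|y-x_j|)^{\alpha+\beta-\sigma}}\right)$. -/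
/-! With `a = 1 + ‖y - xᵢ‖`, `b = 1 + ‖y - xⱼ‖` and `d = ‖xᵢ - xⱼ‖`, the triangle inequality gives
`d / 2 ≤ max a b`. If `a ≤ b`, then `b ^ α * a ^ β = b ^ σ * b ^ (α - σ) * a ^ β ≥ (d / 2) ^ σ * a ^ (α + β - σ)`,
and symmetrically if `b ≤ a`; so `C = 2 ^ σ` works. -/

open Real

lemma rpow_mul_rpow_add_sub_le_of_le {a b α β σ : ℝ} (ha : 0 < a) (hab : a ≤ b) (hσα : σ ≤ α) :
    b ^ σ * a ^ (α + β - σ) ≤ b ^ α * a ^ β := by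
  have hb : 0 < b := ha.trans_le hab
  calc b ^ σ * a ^ (α + β - σ) = b ^ σ * a ^ (α - σ) * a ^ β := by
        rw [mul_assoc, ← rpow_add ha]; ring_nf
    _ ≤ b ^ σ * b ^ (α - σ) * a ^ β := by
        gcongr
    _ = b ^ α * a ^ β := by
        rw [← rpow_add hb]; ring_nf

lemma one_div_rpow_mul_rpow_le_of_le {a b c α β σ : ℝ} (ha : 0 < a) (hab : a ≤ b) (hc : 0 < c)
    (hcb : c ≤ b) (hσ0 : 0 ≤ σ) (hσα : σ ≤ α) :
    1 / (b ^ α * a ^ β) ≤ 1 / c ^ σ * (1 / a ^ (α + β - σ)) := by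
  rw [one_div_mul_one_div]
  refine one_div_le_one_div_of_le (by positivity) ?_
  calc c ^ σ * a ^ (α + β - σ) ≤ b ^ σ * a ^ (α + β - σ) := by gcongr
    _ ≤ b ^ α * a ^ β := rpow_mul_rpow_add_sub_le_of_le ha hab hσα

lemma one_div_rpow_mul_rpow_le_of_le_max {a b c α β σ : ℝ} (ha : 0 < a) (hb : 0 < b)
    (hc : 0 < c) (hc_max : c ≤ max a b) (hσ0 : 0 ≤ σ) (hσα : σ ≤ α) (hσβ : σ ≤ β) :
    1 / (b ^ α * a ^ β) ≤ 1 / c ^ σ * (1 / a ^ (α + β - σ) + 1 / b ^ (α + β - σ)) := by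
  rw [mul_add]
  rcases le_total a b with hab | hba
  · have hcb : c ≤ b := by rwa [max_eq_right hab] at hc_max
    have h_main := one_div_rpow_mul_rpow_le_of_le (β := β) ha hab hc hcb hσ0 hσα
    have h_other : 0 ≤ 1 / c ^ σ * (1 / b ^ (α + β - σ)) := by positivity
    linarith
  · have hca : c ≤ a := by rwa [max_eq_left hba] at hc_max
    have h_main := one_div_rpow_mul_rpow_le_of_le (α := β) (β := α) hb hba hc hca hσ0 hσβ
    rw [mul_comm, add_comm β] at h_main
    have h_other : 0 ≤ 1 / c ^ σ * (1 / a ^ (α + β - σ)) := by positivity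
    linarith

theorem stmt_0_general (N : ℕ)
    (xi xj : EuclideanSpace ℝ (Fin N)) (hne : xi ≠ xj)
    (α β σ : ℝ)
    (hσ0 : 0 < σ) (hσ : σ ≤ min α β) :
    ∃ C > 0, ∀ y : EuclideanSpace ℝ (Fin N),
      1 / ((1 + ‖y - xj‖) ^ α * (1 + ‖y - xi‖) ^ β) ≤
        C / ‖xi - xj‖ ^ σ *
          (1 / (1 + ‖y - xi‖) ^ (α + β - σ) + 1 / (1 + ‖y - xj‖) ^ (α + β - σ)) := by
  have hd : 0 < ‖xi - xj‖ := norm_sub_pos_iff.mpr hne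
  obtain ⟨hσα, hσβ⟩ := le_min_iff.mp hσ
  refine ⟨2 ^ σ, by positivity, fun y => ?_⟩
  have h_half : ‖xi - xj‖ / 2 ≤ max (1 + ‖y - xi‖) (1 + ‖y - xj‖) := by
    have h_tri := norm_sub_le_norm_sub_add_norm_sub xi y xj
    rw [norm_sub_rev xi y] at h_tri
    linarith [le_max_left (1 + ‖y - xi‖) (1 + ‖y - xj‖),
      le_max_right (1 + ‖y - xi‖) (1 + ‖y - xj‖)]
  have hC : 2 ^ σ / ‖xi - xj‖ ^ σ = 1 / (‖xi - xj‖ / 2) ^ σ := by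
    rw [div_rpow hd.le zero_le_two, one_div_div]
  rw [hC]
  exact one_div_rpow_mul_rpow_le_of_le_max (by positivity) (by positivity) (by positivity)
    h_half hσ0.le hσα hσβ

theorem stmt_0 (N : ℕ) (hN : 1 ≤ N)
    (xi xj : EuclideanSpace ℝ (Fin N)) (hne : xi ≠ xj)
    (α β σ : ℝ) (hα : 1 ≤ α) (hβ : 1 ≤ β)
    (hσ0 : 0 < σ) (hσ : σ ≤ min α β) :
    ∃ C > 0, ∀ y : EuclideanSpace ℝ (Fin N),
      1 / ((1 + ‖y - xj‖) ^ α * (1 + ‖y - xi‖) ^ β) ≤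
        C / ‖xi - xj‖ ^ σ *
          (1 / (1 + ‖y - xi‖) ^ (α + β - σ) + 1 / (1 + ‖y - xj‖) ^ (α + β - σ)) :=
  stmt_0_general N xi xj hne α β σ hσ0 hσ
end

section
/- For any constant $0 < \sigma < N-2$ there is a constant $C > 0$ such that for all $y \in \mathbb{R}^N$: $\int_{\mathbb{R}^N} \frac{1}{|y-z|^{N-2}} \cdot \frac{1}{(1+|z|)^{2+\sigma}}\,dz \leq \frac{C}{(1+|y|)^{\sigma}}$. -/
/-!
Split the integral at the scale `ρ = (1 + |y|) / 2`. On the ball `|z - y| < ρ` we have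
`1 + |z| > ρ`, so this part is at most `ρ^{-(2+σ)} ∫_{|x|<ρ} |x|^{2-N} dx ≍ ρ^{-σ}`.
Off that ball `|y - z| ≥ ρ`, and the triangle inequality upgrades this to
`|y - z| ≥ (1 + |z|) / 3`. The first bound handles `|z| < 2ρ`, where
`∫ (1 + |z|)^{-(2+σ)} ≲ ρ^{N-2-σ}` because `σ < N - 2`; the second handles `|z| ≥ 2ρ`, where
`∫ (1 + |z|)^{-(N+σ)} ≲ ρ^{-σ}` because `σ > 0`. The radial integrals are computed in polar
coordinates.
-/

open Real MeasureTheory Set Metric Module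
open scoped ENNReal

local notation "dim" => Module.finrank ℝ

theorem lintegral_Ioo_zero_rpow {b R : ℝ} (hb : -1 < b) (hR : 0 ≤ R) :
    ∫⁻ r in Ioo 0 R, ENNReal.ofReal (r ^ b) = ENNReal.ofReal (R ^ (b + 1) / (b + 1)) := by
  have hint : IntegrableOn (fun r : ℝ ↦ r ^ b) (Ioc 0 R) :=
    (intervalIntegral.intervalIntegrable_rpow' hb).1
  rw [← ofReal_integral_eq_lintegral_ofReal (hint.mono_set Ioo_subset_Ioc_self)
      ((ae_restrict_mem measurableSet_Ioo).mono fun r hr ↦ rpow_nonneg hr.1.le b),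
    ← integral_Ioc_eq_integral_Ioo, ← intervalIntegral.integral_of_le hR,
    integral_rpow (.inl hb), zero_rpow (by linarith), sub_zero]

theorem lintegral_Ioi_rpow {b c : ℝ} (hb : b < -1) (hc : 0 < c) :
    ∫⁻ r in Ioi c, ENNReal.ofReal (r ^ b) = ENNReal.ofReal (-c ^ (b + 1) / (b + 1)) := by
  rw [← ofReal_integral_eq_lintegral_ofReal (integrableOn_Ioi_rpow_of_lt hb hc)
      ((ae_restrict_mem measurableSet_Ioi).mono fun r hr ↦ rpow_nonneg (hc.trans hr).le b),
    integral_Ioi_rpow_of_lt hb hc]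

theorem ofReal_pow_pred_mul_ofReal_rpow_neg {r : ℝ} (hr : 0 < r) {n : ℕ} (hn : n ≠ 0) (a : ℝ) :
    ENNReal.ofReal (r ^ (n - 1)) * ENNReal.ofReal (r ^ (-a)) =
      ENNReal.ofReal (r ^ ((n : ℝ) - a - 1)) := by
  rw [← ENNReal.ofReal_mul (by positivity), ← rpow_natCast, ← rpow_add hr,
    Nat.cast_pred (Nat.pos_of_ne_zero hn)]
  ring_nf

theorem ofReal_pow_pred_mul_ofReal_one_add_rpow_neg_le {r : ℝ} (hr : 0 < r) {n : ℕ}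
    (hn : n ≠ 0) {a : ℝ} (ha : 0 ≤ a) :
    ENNReal.ofReal (r ^ (n - 1)) * ENNReal.ofReal ((1 + r) ^ (-a)) ≤
      ENNReal.ofReal (r ^ ((n : ℝ) - a - 1)) := by
  rw [← ofReal_pow_pred_mul_ofReal_rpow_neg hr hn]
  exact mul_le_mul_right (ENNReal.ofReal_le_ofReal
    (rpow_le_rpow_of_nonpos hr (le_add_of_nonneg_left zero_le_one) (neg_nonpos.2 ha))) _

theorem setLIntegral_ofReal_le_ofReal_mul {α : Type*} [MeasurableSpace α] {μ : Measure α}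
    {s : Set α} (hs : MeasurableSet s) {f g : α → ℝ} {c : ℝ} (hc : 0 ≤ c)
    (h : ∀ x ∈ s, f x ≤ c * g x) :
    ∫⁻ x in s, ENNReal.ofReal (f x) ∂μ ≤
      ENNReal.ofReal c * ∫⁻ x in s, ENNReal.ofReal (g x) ∂μ := by
  rw [← lintegral_const_mul' _ _ ENNReal.ofReal_ne_top]
  exact setLIntegral_mono' hs fun x hx ↦
    (ENNReal.ofReal_le_ofReal (h x hx)).trans_eq (ENNReal.ofReal_mul hc)

theorem integral_le_of_lintegral_ofReal_le {α : Type*} [MeasurableSpace α] {μ : Measure α}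
    {f : α → ℝ} (hf : 0 ≤ f) {c : ℝ} (hc : 0 ≤ c)
    (h : ∫⁻ x, ENNReal.ofReal (f x) ∂μ ≤ ENNReal.ofReal c) :
    ∫ x, f x ∂μ ≤ c := by
  by_cases hm : AEStronglyMeasurable f μ
  · rw [integral_eq_lintegral_of_nonneg_ae (.of_forall hf) hm]
    exact ENNReal.toReal_le_of_le_ofReal hc h
  · rwa [integral_non_aestronglyMeasurable hm]

section Polar

variable {E : Type*} [NormedAddCommGroup E] [NormedSpace ℝ E] [MeasurableSpace E] [BorelSpace E]
  [FiniteDimensional ℝ E] (μ : Measure E) [μ.IsAddHaarMeasure] [Nontrivial E]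

theorem lintegral_fun_norm_addHaar {g : ℝ → ℝ≥0∞} (hg : Measurable g) :
    ∫⁻ x, g ‖x‖ ∂μ = μ.toSphere univ *
      ∫⁻ r in Ioi (0 : ℝ), ENNReal.ofReal (r ^ (dim E - 1)) * g r := by
  have hpolar := μ.measurePreserving_homeomorphUnitSphereProd.lintegral_comp_emb
    (Homeomorph.measurableEmbedding _) (fun p : sphere (0 : E) 1 × Ioi (0 : ℝ) ↦ g p.2)
  calc ∫⁻ x, g ‖x‖ ∂μ = ∫⁻ x : ({0}ᶜ : Set E), g ‖x.1‖ ∂(μ.comap (↑)) := by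
        rw [lintegral_subtype_comap (measurableSet_singleton _).compl fun x ↦ g ‖x‖,
          restrict_compl_singleton]
    _ = ∫⁻ p, g p.2 ∂(μ.toSphere.prod (Measure.volumeIoiPow (dim E - 1))) := by
        simpa [homeomorphUnitSphereProd] using hpolar
    _ = μ.toSphere univ * ∫⁻ r, g r ∂(Measure.volumeIoiPow (dim E - 1)) := by
        rw [lintegral_prod (fun p : sphere (0 : E) 1 × Ioi (0 : ℝ) ↦ g p.2)
          (hg.comp (measurable_subtype_coe.comp measurable_snd)).aemeasurable]
        simp [lintegral_const, mul_comm]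
    _ = _ := by
        congr 1
        exact (lintegral_withDensity_eq_lintegral_mul _
            (measurable_subtype_coe.pow_const _).ennreal_ofReal
            (hg.comp measurable_subtype_coe : Measurable fun r : Ioi (0 : ℝ) ↦ g r)).trans
          (lintegral_subtype_comap measurableSet_Ioi
            fun r ↦ ENNReal.ofReal (r ^ (dim E - 1)) * g r)

theorem setLIntegral_preimage_norm_addHaar {s : Set ℝ} (hs : MeasurableSet s)
    {g : ℝ → ℝ≥0∞} (hg : Measurable g) :
    ∫⁻ x in (‖·‖) ⁻¹' s, g ‖x‖ ∂μ = μ.toSphere univ *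
      ∫⁻ r in s ∩ Ioi 0, ENNReal.ofReal (r ^ (dim E - 1)) * g r := by
  rw [← lintegral_indicator (measurable_norm hs)]
  have hind (x : E) : ((‖·‖) ⁻¹' s).indicator (fun x ↦ g ‖x‖) x = s.indicator g ‖x‖ :=
    indicator_comp_right (g := g) _
  simp_rw [hind, lintegral_fun_norm_addHaar μ (hg.indicator hs),
    ← indicator_mul_right s (fun r ↦ ENNReal.ofReal (r ^ (dim E - 1)))]
  rw [lintegral_indicator hs, Measure.restrict_restrict hs]

theorem setLIntegral_ball_norm_sub_rpow_neg {a R : ℝ} (ha : a < dim E) (hR : 0 ≤ R) (y : E) :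
    ∫⁻ z in ball y R, ENNReal.ofReal (‖z - y‖ ^ (-a)) ∂μ =
      μ.toSphere univ * ENNReal.ofReal (R ^ ((dim E : ℝ) - a) / ((dim E : ℝ) - a)) := by
  have htranslate : ∫⁻ z in ball y R, ENNReal.ofReal (‖z - y‖ ^ (-a)) ∂μ =
      ∫⁻ x in (‖·‖) ⁻¹' Iio R, ENNReal.ofReal (‖x‖ ^ (-a)) ∂μ := by
    rw [← lintegral_indicator measurableSet_ball,
      ← lintegral_indicator (measurable_norm measurableSet_Iio)]
    refine (lintegral_congr fun z ↦ ?_).trans (lintegral_sub_right_eq_self _ y)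
    simp [indicator, dist_eq_norm]
  rw [htranslate, setLIntegral_preimage_norm_addHaar μ measurableSet_Iio
      (g := fun r ↦ ENNReal.ofReal (r ^ (-a))) (by fun_prop), Iio_inter_Ioi,
    setLIntegral_congr_fun measurableSet_Ioo fun r hr ↦
      ofReal_pow_pred_mul_ofReal_rpow_neg hr.1 finrank_pos.ne' a,
    lintegral_Ioo_zero_rpow (by linarith) hR, sub_add_cancel]

theorem setLIntegral_ball_one_add_norm_rpow_neg_le {a R : ℝ} (ha₀ : 0 ≤ a) (ha : a < dim E)
    (hR : 0 ≤ R) :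
    ∫⁻ x in ball 0 R, ENNReal.ofReal ((1 + ‖x‖) ^ (-a)) ∂μ ≤
      μ.toSphere univ * ENNReal.ofReal (R ^ ((dim E : ℝ) - a) / ((dim E : ℝ) - a)) := by
  have hball : ball (0 : E) R = (‖·‖) ⁻¹' Iio R := by ext; simp
  rw [hball, setLIntegral_preimage_norm_addHaar μ measurableSet_Iio
      (g := fun r ↦ ENNReal.ofReal ((1 + r) ^ (-a))) (by fun_prop), Iio_inter_Ioi]
  gcongr
  calc _ ≤ ∫⁻ r in Ioo 0 R, ENNReal.ofReal (r ^ ((dim E : ℝ) - a - 1)) :=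
        setLIntegral_mono' measurableSet_Ioo fun r hr ↦
          ofReal_pow_pred_mul_ofReal_one_add_rpow_neg_le hr.1 finrank_pos.ne' ha₀
    _ = _ := by rw [lintegral_Ioo_zero_rpow (by linarith) hR, sub_add_cancel]

theorem setLIntegral_compl_ball_one_add_norm_rpow_neg_le {a R : ℝ} (ha : dim E < a)
    (hR : 0 < R) :
    ∫⁻ x in (ball 0 R)ᶜ, ENNReal.ofReal ((1 + ‖x‖) ^ (-a)) ∂μ ≤
      μ.toSphere univ * ENNReal.ofReal (R ^ ((dim E : ℝ) - a) / (a - dim E)) := by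
  have hball : (ball (0 : E) R)ᶜ = (‖·‖) ⁻¹' Ici R := by ext; simp
  rw [hball, setLIntegral_preimage_norm_addHaar μ measurableSet_Ici
      (g := fun r ↦ ENNReal.ofReal ((1 + r) ^ (-a))) (by fun_prop),
    inter_eq_left.2 (Ici_subset_Ioi.2 hR), Measure.restrict_congr_set Ioi_ae_eq_Ici.symm]
  gcongr
  calc _ ≤ ∫⁻ r in Ioi R, ENNReal.ofReal (r ^ ((dim E : ℝ) - a - 1)) :=
        setLIntegral_mono' measurableSet_Ioi fun r hr ↦
          ofReal_pow_pred_mul_ofReal_one_add_rpow_neg_le (hR.trans hr) finrank_pos.ne'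
            (by linarith [(dim E).cast_nonneg (α := ℝ)])
    _ = _ := by
        rw [lintegral_Ioi_rpow (by linarith) hR, sub_add_cancel, neg_div, ← div_neg, neg_sub]

end Polar

section Pointwise

variable {E : Type*} [SeminormedAddCommGroup E] {y z : E} {p q : ℝ}

theorem half_one_add_norm_lt_one_add_norm (h : ‖z - y‖ < (1 + ‖y‖) / 2) :
    (1 + ‖y‖) / 2 < 1 + ‖z‖ := by
  linarith [norm_le_norm_add_norm_sub' y z, norm_sub_rev y z]

theorem one_add_norm_le_three_mul_norm_sub (h : (1 + ‖y‖) / 2 ≤ ‖z - y‖) :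
    1 + ‖z‖ ≤ 3 * ‖z - y‖ := by
  linarith [norm_le_norm_add_norm_sub' z y]

theorem rpow_neg_mul_rpow_neg_le_of_norm_sub_lt (hq : 0 ≤ q) (h : ‖z - y‖ < (1 + ‖y‖) / 2) :
    ‖y - z‖ ^ (-p) * (1 + ‖z‖) ^ (-q) ≤ ((1 + ‖y‖) / 2) ^ (-q) * ‖z - y‖ ^ (-p) := by
  rw [norm_sub_rev, mul_comm]
  exact mul_le_mul_of_nonneg_right (rpow_le_rpow_of_nonpos (by positivity)
    (half_one_add_norm_lt_one_add_norm h).le (neg_nonpos.2 hq)) (by positivity)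

theorem rpow_neg_mul_rpow_neg_le_of_le_norm_sub (hp : 0 ≤ p) (h : (1 + ‖y‖) / 2 ≤ ‖z - y‖) :
    ‖y - z‖ ^ (-p) * (1 + ‖z‖) ^ (-q) ≤ ((1 + ‖y‖) / 2) ^ (-p) * (1 + ‖z‖) ^ (-q) := by
  rw [norm_sub_rev]
  exact mul_le_mul_of_nonneg_right (rpow_le_rpow_of_nonpos (by positivity) h (neg_nonpos.2 hp))
    (by positivity)

theorem rpow_neg_mul_rpow_neg_le_three_rpow_mul_of_le_norm_sub (hp : 0 ≤ p)
    (h : (1 + ‖y‖) / 2 ≤ ‖z - y‖) :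
    ‖y - z‖ ^ (-p) * (1 + ‖z‖) ^ (-q) ≤ 3 ^ p * (1 + ‖z‖) ^ (-(p + q)) := by
  have hz : 0 < 1 + ‖z‖ := by positivity
  calc ‖y - z‖ ^ (-p) * (1 + ‖z‖) ^ (-q)
      ≤ (3⁻¹ * (1 + ‖z‖)) ^ (-p) * (1 + ‖z‖) ^ (-q) := by
        rw [norm_sub_rev]
        refine mul_le_mul_of_nonneg_right (rpow_le_rpow_of_nonpos (by positivity) ?_
          (neg_nonpos.2 hp)) (by positivity)
        linarith [one_add_norm_le_three_mul_norm_sub h]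
    _ = 3 ^ p * (1 + ‖z‖) ^ (-(p + q)) := by
        rw [mul_rpow (by norm_num) hz.le, inv_rpow (by norm_num), ← rpow_neg (by norm_num),
          neg_neg, mul_assoc, ← rpow_add hz, neg_add]

end Pointwise

theorem div_two_rpow_neg {t : ℝ} (ht : 0 ≤ t) (p : ℝ) : (t / 2) ^ (-p) = 2 ^ p * t ^ (-p) := by
  rw [div_rpow ht zero_le_two, rpow_neg zero_le_two, div_inv_eq_mul, mul_comm]

section Potential

variable {E : Type*} [NormedAddCommGroup E] [NormedSpace ℝ E] [MeasurableSpace E] [BorelSpace E]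
  [FiniteDimensional ℝ E] (μ : Measure E) [μ.IsAddHaarMeasure] {σ : ℝ} (y : E)

theorem setLIntegral_ball_potential_le [Nontrivial E] (hσ : 0 ≤ σ) :
    ∫⁻ z in ball y ((1 + ‖y‖) / 2),
        ENNReal.ofReal (‖y - z‖ ^ (-((dim E : ℝ) - 2)) * (1 + ‖z‖) ^ (-(2 + σ))) ∂μ ≤
      μ.toSphere univ * ENNReal.ofReal (2 ^ σ / 2 * (1 + ‖y‖) ^ (-σ)) := by
  have hρ : 0 < (1 + ‖y‖) / 2 := by positivity
  calc _ ≤ ENNReal.ofReal (((1 + ‖y‖) / 2) ^ (-(2 + σ))) *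
        ∫⁻ z in ball y ((1 + ‖y‖) / 2), ENNReal.ofReal (‖z - y‖ ^ (-((dim E : ℝ) - 2))) ∂μ :=
        setLIntegral_ofReal_le_ofReal_mul measurableSet_ball (by positivity) fun z hz ↦
          rpow_neg_mul_rpow_neg_le_of_norm_sub_lt (by linarith) (mem_ball_iff_norm.1 hz)
    _ = _ := by
        rw [setLIntegral_ball_norm_sub_rpow_neg μ (by linarith) hρ.le, sub_sub_cancel,
          mul_left_comm, ← ENNReal.ofReal_mul (by positivity), mul_div_assoc', ← rpow_add hρ,
          show -(2 + σ) + 2 = -σ by ring, div_two_rpow_neg (by positivity)]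
        ring_nf

theorem setLIntegral_inter_ball_potential_le [Nontrivial E] (hσ₀ : 0 ≤ σ)
    (hσ : σ < dim E - 2) :
    ∫⁻ z in (ball y ((1 + ‖y‖) / 2))ᶜ ∩ ball 0 (1 + ‖y‖),
        ENNReal.ofReal (‖y - z‖ ^ (-((dim E : ℝ) - 2)) * (1 + ‖z‖) ^ (-(2 + σ))) ∂μ ≤
      μ.toSphere univ *
        ENNReal.ofReal (2 ^ ((dim E : ℝ) - 2) / (dim E - 2 - σ) * (1 + ‖y‖) ^ (-σ)) := by
  have ht : 0 < 1 + ‖y‖ := by positivity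
  calc _ ≤ ENNReal.ofReal (((1 + ‖y‖) / 2) ^ (-((dim E : ℝ) - 2))) *
        ∫⁻ z in (ball y ((1 + ‖y‖) / 2))ᶜ ∩ ball 0 (1 + ‖y‖),
          ENNReal.ofReal ((1 + ‖z‖) ^ (-(2 + σ))) ∂μ :=
        setLIntegral_ofReal_le_ofReal_mul (measurableSet_ball.compl.inter measurableSet_ball)
          (by positivity) fun z hz ↦ rpow_neg_mul_rpow_neg_le_of_le_norm_sub (by linarith)
            (by simpa [dist_eq_norm] using hz.1)
    _ ≤ ENNReal.ofReal (((1 + ‖y‖) / 2) ^ (-((dim E : ℝ) - 2))) *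
        ∫⁻ z in ball 0 (1 + ‖y‖), ENNReal.ofReal ((1 + ‖z‖) ^ (-(2 + σ))) ∂μ := by
        gcongr
        exact inter_subset_right
    _ ≤ ENNReal.ofReal (((1 + ‖y‖) / 2) ^ (-((dim E : ℝ) - 2))) * (μ.toSphere univ *
          ENNReal.ofReal ((1 + ‖y‖) ^ ((dim E : ℝ) - (2 + σ)) / ((dim E : ℝ) - (2 + σ)))) := by
        gcongr
        exact setLIntegral_ball_one_add_norm_rpow_neg_le μ (by linarith) (by linarith) ht.le
    _ = _ := by
        rw [mul_left_comm, ← ENNReal.ofReal_mul (by positivity), div_two_rpow_neg ht.le,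
          mul_assoc, mul_div_assoc', ← rpow_add ht,
          show -((dim E : ℝ) - 2) + (dim E - (2 + σ)) = -σ by ring,
          show (dim E : ℝ) - (2 + σ) = dim E - 2 - σ by ring]
        ring_nf

theorem setLIntegral_diff_ball_potential_le [Nontrivial E] (hσ₀ : 0 < σ)
    (hd : 2 ≤ (dim E : ℝ)) :
    ∫⁻ z in (ball y ((1 + ‖y‖) / 2))ᶜ \ ball 0 (1 + ‖y‖),
        ENNReal.ofReal (‖y - z‖ ^ (-((dim E : ℝ) - 2)) * (1 + ‖z‖) ^ (-(2 + σ))) ∂μ ≤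
      μ.toSphere univ * ENNReal.ofReal (3 ^ ((dim E : ℝ) - 2) / σ * (1 + ‖y‖) ^ (-σ)) := by
  have ht : 0 < 1 + ‖y‖ := by positivity
  calc _ ≤ ENNReal.ofReal (3 ^ ((dim E : ℝ) - 2)) *
        ∫⁻ z in (ball y ((1 + ‖y‖) / 2))ᶜ \ ball 0 (1 + ‖y‖),
          ENNReal.ofReal ((1 + ‖z‖) ^ (-((dim E : ℝ) - 2 + (2 + σ)))) ∂μ :=
        setLIntegral_ofReal_le_ofReal_mul (measurableSet_ball.compl.diff measurableSet_ball)
          (by positivity) fun z hz ↦ rpow_neg_mul_rpow_neg_le_three_rpow_mul_of_le_norm_sub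
            (by linarith) (by simpa [dist_eq_norm] using hz.1)
    _ ≤ ENNReal.ofReal (3 ^ ((dim E : ℝ) - 2)) *
        ∫⁻ z in (ball 0 (1 + ‖y‖))ᶜ,
          ENNReal.ofReal ((1 + ‖z‖) ^ (-((dim E : ℝ) - 2 + (2 + σ)))) ∂μ := by
        gcongr
        exact sdiff_subset_compl _ _
    _ ≤ ENNReal.ofReal (3 ^ ((dim E : ℝ) - 2)) * (μ.toSphere univ * ENNReal.ofReal
          ((1 + ‖y‖) ^ ((dim E : ℝ) - (dim E - 2 + (2 + σ))) /
            ((dim E - 2 + (2 + σ)) - dim E))) := by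
        gcongr
        exact setLIntegral_compl_ball_one_add_norm_rpow_neg_le μ (by linarith) ht
    _ = _ := by
        rw [mul_left_comm, ← ENNReal.ofReal_mul (by positivity),
          show (dim E : ℝ) - (dim E - 2 + (2 + σ)) = -σ by ring,
          show (dim E : ℝ) - 2 + (2 + σ) - dim E = σ by ring]
        ring_nf

theorem exists_lintegral_potential_le (hσ₀ : 0 < σ) (hσ : σ < dim E - 2) :
    ∃ C > 0, ∀ y : E,
      ∫⁻ z, ENNReal.ofReal (‖y - z‖ ^ (-((dim E : ℝ) - 2)) * (1 + ‖z‖) ^ (-(2 + σ))) ∂μ ≤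
        ENNReal.ofReal (C * (1 + ‖y‖) ^ (-σ)) := by
  have hd : 2 ≤ (dim E : ℝ) := by linarith
  have : Nontrivial E :=
    nontrivial_of_finrank_pos (by exact_mod_cast (by linarith : 0 < (dim E : ℝ)))
  have hκ : μ.toSphere univ ≠ ⊤ := measure_ne_top _ _
  have hκ₀ : 0 < (μ.toSphere univ).toReal :=
    ENNReal.toReal_pos (Measure.measure_univ_ne_zero.2 μ.toSphere_ne_zero) hκ
  have hσd : 0 < (dim E : ℝ) - 2 - σ := by linarith
  refine ⟨(μ.toSphere univ).toReal *
      (2 ^ σ / 2 + 2 ^ ((dim E : ℝ) - 2) / (dim E - 2 - σ) + 3 ^ ((dim E : ℝ) - 2) / σ),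
    by positivity, fun y ↦ ?_⟩
  calc _ = ∫⁻ z in ball y ((1 + ‖y‖) / 2), _ ∂μ +
        (∫⁻ z in (ball y ((1 + ‖y‖) / 2))ᶜ ∩ ball 0 (1 + ‖y‖), _ ∂μ +
          ∫⁻ z in (ball y ((1 + ‖y‖) / 2))ᶜ \ ball 0 (1 + ‖y‖), _ ∂μ) := by
        rw [lintegral_inter_add_sdiff _ _ measurableSet_ball,
          lintegral_add_compl _ measurableSet_ball]
    _ ≤ _ := add_le_add (setLIntegral_ball_potential_le μ y hσ₀.le)
        (add_le_add (setLIntegral_inter_ball_potential_le μ y hσ₀.le hσ)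
          (setLIntegral_diff_ball_potential_le μ y hσ₀ hd))
    _ = _ := by
        rw [← mul_add, ← mul_add, ← ENNReal.ofReal_add (by positivity) (by positivity),
          ← ENNReal.ofReal_add (by positivity) (by positivity),
          mul_assoc (μ.toSphere univ).toReal, ENNReal.ofReal_mul hκ₀.le,
          ENNReal.ofReal_toReal hκ]
        ring_nf

end Potential

theorem stmt_1_general (N : ℕ) (σ : ℝ) (hσ0 : 0 < σ) (hσ : σ < (N : ℝ) - 2) :
    ∃ C > 0, ∀ y : EuclideanSpace ℝ (Fin N),
      ∫ z : EuclideanSpace ℝ (Fin N),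
          1 / ‖y - z‖ ^ ((N : ℝ) - 2) * (1 / (1 + ‖z‖) ^ (2 + σ)) ≤
        C / (1 + ‖y‖) ^ σ := by
  obtain ⟨C, hC, hbound⟩ := exists_lintegral_potential_le
    (volume : Measure (EuclideanSpace ℝ (Fin N))) hσ0 (by rwa [finrank_euclideanSpace_fin])
  refine ⟨C, hC, fun y ↦ ?_⟩
  simp only [finrank_euclideanSpace_fin] at hbound
  simp_rw [one_div, ← rpow_neg (norm_nonneg _),
    ← rpow_neg (add_nonneg zero_le_one (norm_nonneg _)), div_eq_mul_inv]
  rw [← rpow_neg (by positivity)]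
  exact integral_le_of_lintegral_ofReal_le (fun z ↦ by positivity) (by positivity) (hbound y)

theorem stmt_1 (N : ℕ) (hN : 3 ≤ N) (σ : ℝ) (hσ0 : 0 < σ) (hσ : σ < (N : ℝ) - 2) :
    ∃ C > 0, ∀ y : EuclideanSpace ℝ (Fin N),
      ∫ z : EuclideanSpace ℝ (Fin N),
          1 / ‖y - z‖ ^ ((N : ℝ) - 2) * (1 / (1 + ‖z‖) ^ (2 + σ)) ≤
        C / (1 + ‖y‖) ^ σ :=
  stmt_1_general N σ hσ0 hσ
end

section
/- Let $N \geq 3$ and $\tau > 1$. Let $x_1, \dots, x_k$ be points in $\mathbb{R}^N$ with pairwise distances $|x_i - x_j| \geq d$ for $i \neq j$, where $d \geq 1$, and suppose $\sum_{j=2}^k |x_j - x_1|^{-\tau} \leq 1$ (as holds in the paper's configuration). Then there is a constant $C$ depending only on $N, \tau$ such that for all $y \in \mathbb{R}^N$: $\left(\sum_{j=1}^k \frac{1}{(1+|y-x_j|)^{\frac{N+2}{2}+\tau}}\right)\left(\sum_{i=1}^k \frac{1}{(1+|y-x_i|)^{\frac{N-2}{2}+\tau}}\right) \leq C \sum_{j=1}^k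 \frac{1}{(1+|y-x_j|)^{N+\tau}}$. -/
/-!
Write `u_j = 1 + |y - x_j|`. Expanding the product, the diagonal terms are at most
`u_j^{-(N+τ)}` since the exponents add up to `N + 2τ`. For `i ≠ j`, the triangle inequality gives
`|x_i - x_j| ≤ u_i + u_j ≤ 2 max(u_i, u_j)`, so one factor `max(u_i, u_j)^{-τ}` can be traded
for `(2 / |x_i - x_j|)^τ`, leaving `u_i^{-(N+τ)} + u_j^{-(N+τ)}`. Summing over `i ≠ j`, the
weights `|x_i - x_j|^{-τ}` add up to at most `1`, so the whole product is at most
`(1 + 2·2^τ) ∑ u_j^{-(N+τ)}`.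
-/

open Real Finset

lemma one_div_rpow_mul_one_div_rpow_le_of_le {u v r a b τ : ℝ} (hu : 0 < u) (hr : 0 < r)
    (hrv : r ≤ 2 * v) (hτ : 0 ≤ τ) (hb : τ ≤ b) (huv : u ≤ v) :
    1 / u ^ a * (1 / v ^ b) ≤ 2 ^ τ * (1 / r ^ τ) * (1 / u ^ (a + b - τ)) := by
  have hv : 0 < v := hu.trans_le huv
  have hr_pow : r ^ τ ≤ 2 ^ τ * v ^ τ := by
    rw [← mul_rpow zero_le_two hv.le]
    exact rpow_le_rpow hr.le hrv hτ
  have hu_pow : u ^ (b - τ) ≤ v ^ (b - τ) := rpow_le_rpow hu.le huv (by linarith)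
  have key : r ^ τ * u ^ (a + b - τ) ≤ 2 ^ τ * (u ^ a * v ^ b) :=
    calc r ^ τ * u ^ (a + b - τ) = r ^ τ * (u ^ a * u ^ (b - τ)) := by
          rw [← rpow_add hu]; ring_nf
      _ ≤ (2 ^ τ * v ^ τ) * (u ^ a * v ^ (b - τ)) := by gcongr
      _ = 2 ^ τ * (u ^ a * v ^ b) := by
          rw [mul_mul_mul_comm, ← rpow_add hv, add_sub_cancel]; ring
  have hrhs : 2 ^ τ * (1 / r ^ τ) * (1 / u ^ (a + b - τ)) =
      2 ^ τ / (r ^ τ * u ^ (a + b - τ)) := by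
    ring
  rw [one_div_mul_one_div, hrhs, div_le_div_iff₀ (by positivity) (by positivity)]
  linarith

lemma one_div_rpow_mul_one_div_rpow_le {u v r a b τ : ℝ} (hu : 0 < u) (hv : 0 < v) (hr : 0 < r)
    (hruv : r ≤ u + v) (hτ : 0 ≤ τ) (ha : τ ≤ a) (hb : τ ≤ b) :
    1 / u ^ a * (1 / v ^ b) ≤
      2 ^ τ * (1 / r ^ τ) * (1 / u ^ (a + b - τ) + 1 / v ^ (a + b - τ)) := by
  rcases le_total u v with huv | hvu
  · have := one_div_rpow_mul_one_div_rpow_le_of_le (a := a) hu hr (by linarith) hτ hb huv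
    have : 0 ≤ 2 ^ τ * (1 / r ^ τ) * (1 / v ^ (a + b - τ)) := by positivity
    linarith
  · have h := one_div_rpow_mul_one_div_rpow_le_of_le (a := b) hv hr (by linarith) hτ ha hvu
    rw [mul_comm (1 / v ^ b), add_comm b a] at h
    have : 0 ≤ 2 ^ τ * (1 / r ^ τ) * (1 / u ^ (a + b - τ)) := by positivity
    linarith

section FiniteSums

variable {ι : Type*} [Fintype ι] [DecidableEq ι]

lemma sum_sum_erase_mul_le_sum {w : ι → ι → ℝ} {h : ι → ℝ}
    (hw : ∀ j, ∑ i ∈ univ.erase j, w i j ≤ 1) (hh : ∀ j, 0 ≤ h j) :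
    ∑ j, ∑ i ∈ univ.erase j, w i j * h j ≤ ∑ j, h j :=
  sum_le_sum fun j _ => by
    rw [← sum_mul]
    exact mul_le_of_le_one_left (hh j) (hw j)

lemma sum_mul_sum_le_of_offDiag_le {f g h : ι → ℝ} {w : ι → ι → ℝ} {c : ℝ} (hc : 0 ≤ c)
    (hh : ∀ j, 0 ≤ h j) (hw : ∀ j, ∑ i ∈ univ.erase j, w i j ≤ 1)
    (hw_symm : ∀ i j, w i j = w j i) (hdiag : ∀ j, f j * g j ≤ h j)
    (hoff : ∀ i j, i ≠ j → f j * g i ≤ c * w i j * (h j + h i)) :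
    (∑ j, f j) * (∑ i, g i) ≤ (1 + 2 * c) * ∑ j, h j := by
  have hch : ∀ j, 0 ≤ c * h j := fun j => mul_nonneg hc (hh j)
  have hleft : ∑ j, ∑ i ∈ univ.erase j, w i j * (c * h j) ≤ ∑ j, c * h j :=
    sum_sum_erase_mul_le_sum hw hch
  have hright : ∑ j, ∑ i ∈ univ.erase j, w i j * (c * h i) ≤ ∑ i, c * h i := by
    rw [sum_comm' (t' := univ) (s' := fun i => univ.erase i) (by simp [ne_comm])]
    exact sum_sum_erase_mul_le_sum (w := fun i j => w j i)
      (fun j => (sum_congr rfl fun i _ => hw_symm j i).trans_le (hw j)) hch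
  calc (∑ j, f j) * (∑ i, g i) = ∑ j, (f j * g j + ∑ i ∈ univ.erase j, f j * g i) := by
        rw [sum_mul_sum]
        exact sum_congr rfl fun j _ => (add_sum_erase _ _ (mem_univ j)).symm
    _ ≤ ∑ j, (h j + ∑ i ∈ univ.erase j, (w i j * (c * h j) + w i j * (c * h i))) := by
        gcongr with j _ i hi
        · exact hdiag j
        · linarith [hoff i j (ne_of_mem_erase hi)]
    _ ≤ ∑ j, h j + (∑ j, c * h j + ∑ i, c * h i) := by
        simp only [sum_add_distrib]
        linarith
    _ = (1 + 2 * c) * ∑ j, h j := by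
        rw [← mul_sum]; ring

end FiniteSums

theorem stmt_10 (N : ℕ) (hN : 3 ≤ N) (τ : ℝ) (hτ : 1 < τ) :
    ∃ C > (0 : ℝ),
      ∀ (k : ℕ) (x : Fin k → EuclideanSpace ℝ (Fin N)) (d : ℝ), 1 ≤ d →
        (∀ i j, i ≠ j → d ≤ ‖x i - x j‖) →
        (∀ j₀ : Fin k, (∑ j ∈ Finset.univ.erase j₀, 1 / ‖x j - x j₀‖ ^ τ) ≤ 1) →
        ∀ y : EuclideanSpace ℝ (Fin N),
          (∑ j : Fin k, 1 / (1 + ‖y - x j‖) ^ (((N : ℝ) + 2) / 2 + τ)) *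
            (∑ i : Fin k, 1 / (1 + ‖y - x i‖) ^ (((N : ℝ) - 2) / 2 + τ)) ≤
          C * ∑ j : Fin k, 1 / (1 + ‖y - x j‖) ^ ((N : ℝ) + τ) := by
  refine ⟨1 + 2 * 2 ^ τ, by positivity, fun k x d hd hsep hsum y => ?_⟩
  have hN' : (3 : ℝ) ≤ N := by exact_mod_cast hN
  have hexp : ((N : ℝ) + 2) / 2 + τ + (((N : ℝ) - 2) / 2 + τ) - τ = N + τ := by ring
  have hu : ∀ j, 1 ≤ 1 + ‖y - x j‖ := fun j => le_add_of_nonneg_right (norm_nonneg _)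
  refine sum_mul_sum_le_of_offDiag_le (by positivity) (fun j => by positivity) hsum
    (fun i j => by rw [norm_sub_rev]) (fun j => ?_) (fun i j hij => ?_)
  · rw [one_div_mul_one_div, ← rpow_add (zero_lt_one.trans_le (hu j))]
    exact one_div_le_one_div_of_le (by positivity)
      (rpow_le_rpow_of_exponent_le (hu j) (by linarith))
  · have hr : 0 < ‖x i - x j‖ := by linarith [hsep i j hij]
    have htri : ‖x i - x j‖ ≤ (1 + ‖y - x j‖) + (1 + ‖y - x i‖) := by
      rw [← sub_sub_sub_cancel_left (x j) (x i) y]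
      linarith [norm_sub_le (y - x j) (y - x i)]
    rw [← hexp]
    exact one_div_rpow_mul_one_div_rpow_le (by linarith [hu j]) (by linarith [hu i]) hr htri
      (by linarith) (by linarith) (by linarith)
end

section
/- Let $N \geq 3$, $\tau > 0$, and let $x_1, \dots, x_k$ be $k$ equally spaced points on a circle of radius $r$ in $\mathbb{R}^2 \times \{0\} \subset \mathbb{R}^N$ with $k/r \leq 1$. Suppose $\bar\eta \in (0, 2\tau)$ satisfies $\tau - \bar\eta/2 > 1$. Then there is a constant $C = C(N, \tau, \bar\eta)$ such that for all $y$ in the sector $\Omega_1$ (i.e. $|y - x_1| \leq |y - x_j|$ for all $j$): $\sum_{j=2}^{k} \frac{1}{(1 + |y - x_j|)^{\frac{N-2}{2} + \tau}} \leq \frac{C}{(1 + |y - x_1|)^{\frac{N-2}{2} + \frac{\bar\eta}{2}}}$. -/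
open Real Finset

/-- `k` equally spaced points on the circle of radius `r` in the first two
coordinates of `ℝ^N` (indexed by `j = 1, ..., k`). -/
noncomputable def circlePoint (N k : ℕ) (r : ℝ) (j : ℕ) : EuclideanSpace ℝ (Fin N) :=
  WithLp.toLp 2 (fun i : Fin N =>
    if (i : ℕ) = 0 then r * Real.cos (2 * ((j : ℝ) - 1) * π / k)
    else if (i : ℕ) = 1 then r * Real.sin (2 * ((j : ℝ) - 1) * π / k)
    else 0)

/-!
For `y` in the sector of `x₁` the triangle inequality gives `2‖y - xⱼ‖ ≥ ‖xⱼ - x₁‖`, and by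
Jordan's inequality the chord `‖xⱼ - x₁‖ = 2r sin((j-1)π/k)` is at least `4 (r/k) mⱼ` with
`mⱼ = min (j-1) (k+1-j)`; as `k ≤ r`, this gives `mⱼ ≤ 1 + ‖y - xⱼ‖`. Splitting the exponent as
`(N-2)/2 + τ = ((N-2)/2 + η/2) + (τ - η/2)` and using `‖y - x₁‖ ≤ ‖y - xⱼ‖` on the first part
bounds the `j`-th term by `(1 + ‖y - x₁‖)^(-(N-2)/2 - η/2) · mⱼ^(-(τ - η/2))`. Bounding
`mⱼ^(-b)` by `(j-1)^(-b) + (k+1-j)^(-b)`, the sum of these factors is at most `2 ∑ n^(-b)`,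
finite since `b = τ - η/2 > 1`.
-/

lemma Real.mul_min_le_sin {x : ℝ} (hx : 0 ≤ x) (hxπ : x ≤ π) :
    2 / π * min x (π - x) ≤ sin x := by
  rcases le_total x (π / 2) with hle | hge
  · exact (mul_le_mul_of_nonneg_left (min_le_left _ _) (by positivity)).trans
      (mul_le_sin hx hle)
  · rw [← sin_pi_sub]
    exact (mul_le_mul_of_nonneg_left (min_le_right _ _) (by positivity)).trans
      (mul_le_sin (by linarith) (by linarith))

lemma apply_min_le_add {α : Type*} [LinearOrder α] (f : α → ℝ) (hf : ∀ x, 0 ≤ f x) (a b : α) :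
    f (min a b) ≤ f a + f b := by
  rcases min_choice a b with h | h <;> rw [h]
  · linarith [hf b]
  · linarith [hf a]

lemma sum_comp_le_tsum_of_injOn {ι : Type*} {f : ℕ → ℝ} (hf : Summable f) (hf0 : ∀ n, 0 ≤ f n)
    {s : Finset ι} {e : ι → ℕ} (he : Set.InjOn e s) :
    ∑ j ∈ s, f (e j) ≤ ∑' n, f n := by
  rw [← sum_image he]
  exact hf.sum_le_tsum _ fun n _ => hf0 n

lemma sum_Icc_apply_min_le_two_mul_tsum {f : ℕ → ℝ} (hf : Summable f) (hf0 : ∀ n, 0 ≤ f n)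
    (k : ℕ) :
    ∑ j ∈ Icc 2 k, f (min (j - 1) (k + 1 - j)) ≤ 2 * ∑' n, f n := by
  calc ∑ j ∈ Icc 2 k, f (min (j - 1) (k + 1 - j))
      ≤ ∑ j ∈ Icc 2 k, f (j - 1) + ∑ j ∈ Icc 2 k, f (k + 1 - j) := by
        rw [← sum_add_distrib]
        exact sum_le_sum fun j _ => apply_min_le_add f hf0 _ _
    _ ≤ ∑' n, f n + ∑' n, f n := by
        gcongr <;> refine sum_comp_le_tsum_of_injOn hf hf0 fun i hi j hj hij => ?_
        · simp only [coe_Icc, Set.mem_Icc] at hi hj; omega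
        · simp only [coe_Icc, Set.mem_Icc] at hi hj; omega
    _ = 2 * ∑' n, f n := (two_mul _).symm

lemma one_div_rpow_add_le {a b u v m : ℝ} (ha : 0 ≤ a) (hb : 0 ≤ b) (hu : 0 < u) (huv : u ≤ v)
    (hm : 0 < m) (hmv : m ≤ v) :
    1 / v ^ (a + b) ≤ 1 / u ^ a * (1 / m ^ b) := by
  rw [one_div_mul_one_div, rpow_add (hu.trans_le huv)]
  have : 0 ≤ v ^ a := rpow_nonneg (hu.le.trans huv) a
  gcongr

lemma chord_sq (r x : ℝ) :
    (r * cos (2 * x) - r) ^ 2 + (r * sin (2 * x)) ^ 2 = (2 * r * sin x) ^ 2 := by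
  rw [cos_two_mul, sin_two_mul]
  linear_combination 4 * r ^ 2 * (cos x ^ 2 - 1) * sin_sq_add_cos_sq x

lemma norm_circlePoint_sub_circlePoint_one {N : ℕ} (hN : 2 ≤ N) (k : ℕ) (r : ℝ) (j : ℕ) :
    ‖circlePoint N k r j - circlePoint N k r 1‖ = 2 * |r| * |sin (((j : ℝ) - 1) * π / k)| := by
  obtain ⟨n, rfl⟩ := Nat.exists_eq_add_of_le' hN
  rw [EuclideanSpace.norm_eq, Fin.sum_univ_succ, Fin.sum_univ_succ]
  have hθ : 2 * ((j : ℝ) - 1) * π / k = 2 * (((j : ℝ) - 1) * π / k) := by ring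
  simp only [circlePoint, PiLp.sub_apply, Fin.val_zero, Fin.val_succ, hθ, Real.norm_eq_abs, sq_abs]
  simp [chord_sq, sqrt_sq_eq_abs, abs_mul]

lemma four_mul_div_mul_min_le_norm_circlePoint_sub {N : ℕ} (hN : 2 ≤ N) {k : ℕ} {r : ℝ}
    (hr : 0 ≤ r) {j : ℕ} (hj : 1 ≤ j) (hjk : j ≤ k + 1) :
    4 * r / k * (min (j - 1) (k + 1 - j) : ℕ) ≤ ‖circlePoint N k r j - circlePoint N k r 1‖ := by
  rcases Nat.eq_zero_or_pos k with rfl | hk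
  · simp
  have hk' : (0 : ℝ) < k := by exact_mod_cast hk
  set x : ℝ := ((j : ℝ) - 1) * π / k with hx
  have hx0 : 0 ≤ x := by
    have : (1 : ℝ) ≤ j := by exact_mod_cast hj
    rw [hx]; have := pi_pos; positivity
  have hxπ : x ≤ π := by
    have : (j : ℝ) ≤ k + 1 := by exact_mod_cast hjk
    rw [hx, div_le_iff₀ hk']; nlinarith [pi_pos]
  have hmin : min x (π - x) = π / k * (min (j - 1) (k + 1 - j) : ℕ) := by
    rw [Nat.cast_min, Nat.cast_sub hj, Nat.cast_sub hjk,
      mul_min_of_nonneg _ _ (by positivity : 0 ≤ π / k)]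
    congr 1
    · rw [hx]; push_cast; ring
    · rw [hx]; field_simp; push_cast; ring
  rw [norm_circlePoint_sub_circlePoint_one hN, abs_of_nonneg hr, ← hx,
    abs_of_nonneg (sin_nonneg_of_nonneg_of_le_pi hx0 hxπ)]
  calc 4 * r / k * (min (j - 1) (k + 1 - j) : ℕ) = 2 * r * (2 / π * min x (π - x)) := by
        rw [hmin]; field_simp; ring
    _ ≤ 2 * r * sin x := by gcongr; exact mul_min_le_sin hx0 hxπ

lemma two_mul_min_le_norm_sub_circlePoint {N : ℕ} (hN : 2 ≤ N) {k : ℕ} (hk : 0 < k) {r : ℝ}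
    (hkr : (k : ℝ) ≤ r) {j : ℕ} (hj : 1 ≤ j) (hjk : j ≤ k + 1) {y : EuclideanSpace ℝ (Fin N)}
    (hy : ‖y - circlePoint N k r 1‖ ≤ ‖y - circlePoint N k r j‖) :
    2 * (min (j - 1) (k + 1 - j) : ℕ) ≤ ‖y - circlePoint N k r j‖ := by
  have hk' : (0 : ℝ) < k := by exact_mod_cast hk
  have hchord := four_mul_div_mul_min_le_norm_circlePoint_sub hN (hk'.le.trans hkr) hj hjk
  have htri : ‖circlePoint N k r j - circlePoint N k r 1‖
      ≤ ‖y - circlePoint N k r j‖ + ‖y - circlePoint N k r 1‖ := by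
    simpa only [norm_sub_rev (circlePoint N k r j) y] using
      norm_sub_le_norm_sub_add_norm_sub (circlePoint N k r j) y (circlePoint N k r 1)
  have hscale : 4 ≤ 4 * r / k := by rw [le_div_iff₀ hk']; linarith
  have hm : (0 : ℝ) ≤ (min (j - 1) (k + 1 - j) : ℕ) := Nat.cast_nonneg _
  nlinarith

theorem stmt_15_general (N : ℕ) (hN : 3 ≤ N) (τ eta : ℝ)
    (heta0 : 0 < eta) (hτη : τ - eta / 2 > 1) :
    ∃ C > (0 : ℝ),
      ∀ (k : ℕ), 2 ≤ k → ∀ r : ℝ, 0 < r → (k : ℝ) / r ≤ 1 →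
        ∀ y : EuclideanSpace ℝ (Fin N),
          (∀ j, 2 ≤ j → j ≤ k → ‖y - circlePoint N k r 1‖ ≤ ‖y - circlePoint N k r j‖) →
          (∑ j ∈ Finset.Icc 2 k,
              1 / (1 + ‖y - circlePoint N k r j‖) ^ (((N : ℝ) - 2) / 2 + τ)) ≤
            C / (1 + ‖y - circlePoint N k r 1‖) ^ (((N : ℝ) - 2) / 2 + eta / 2) := by
  have ha : 0 ≤ ((N : ℝ) - 2) / 2 + eta / 2 := by
    have : (3 : ℝ) ≤ N := by exact_mod_cast hN
    linarith
  set a : ℝ := ((N : ℝ) - 2) / 2 + eta / 2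
  set b : ℝ := τ - eta / 2
  set g : ℕ → ℝ := fun n => 1 / (n : ℝ) ^ b
  have hg : Summable g := summable_one_div_nat_rpow.mpr hτη
  have hg0 (n : ℕ) : 0 ≤ g n := by positivity
  refine ⟨2 * ∑' n, g n, by linarith [hg.tsum_pos hg0 1 (by simp [g])], ?_⟩
  intro k hk r hr hkr y hy
  set d₁ := ‖y - circlePoint N k r 1‖
  have hterm : ∀ j ∈ Icc 2 k, 1 / (1 + ‖y - circlePoint N k r j‖) ^ (((N : ℝ) - 2) / 2 + τ)
      ≤ 1 / (1 + d₁) ^ a * g (min (j - 1) (k + 1 - j)) := by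
    intro j hj
    rw [mem_Icc] at hj
    have hm : (1 : ℝ) ≤ (min (j - 1) (k + 1 - j) : ℕ) := by
      exact_mod_cast Nat.le_min.mpr ⟨by omega, by omega⟩
    have hdist := two_mul_min_le_norm_sub_circlePoint (by omega) (by omega)
      ((div_le_one hr).mp hkr) (by omega) (by omega) (hy j hj.1 hj.2)
    rw [show ((N : ℝ) - 2) / 2 + τ = a + b by ring]
    exact one_div_rpow_add_le ha (by linarith) (by positivity) (by linarith [hy j hj.1 hj.2])
      (by linarith) (by linarith)
  calc _ ≤ ∑ j ∈ Icc 2 k, 1 / (1 + d₁) ^ a * g (min (j - 1) (k + 1 - j)) := sum_le_sum hterm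
    _ = 1 / (1 + d₁) ^ a * ∑ j ∈ Icc 2 k, g (min (j - 1) (k + 1 - j)) := (mul_sum ..).symm
    _ ≤ 1 / (1 + d₁) ^ a * (2 * ∑' n, g n) := by
        gcongr
        exact sum_Icc_apply_min_le_two_mul_tsum hg hg0 k
    _ = _ := by ring

theorem stmt_15 (N : ℕ) (hN : 3 ≤ N) (τ eta : ℝ) (hτ : 0 < τ)
    (heta0 : 0 < eta) (heta : eta < 2 * τ) (hτη : τ - eta / 2 > 1) :
    ∃ C > (0 : ℝ),
      ∀ (k : ℕ), 2 ≤ k → ∀ r : ℝ, 0 < r → (k : ℝ) / r ≤ 1 →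
        ∀ y : EuclideanSpace ℝ (Fin N),
          (∀ j, 2 ≤ j → j ≤ k → ‖y - circlePoint N k r 1‖ ≤ ‖y - circlePoint N k r j‖) →
          (∑ j ∈ Finset.Icc 2 k,
              1 / (1 + ‖y - circlePoint N k r j‖) ^ (((N : ℝ) - 2) / 2 + τ)) ≤
            C / (1 + ‖y - circlePoint N k r 1‖) ^ (((N : ℝ) - 2) / 2 + eta / 2) :=
  stmt_15_general N hN τ eta heta0 hτη
end
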